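/- arXiv:0904.0919 — 3 statements merged into one kernel-verified Lean document; each statement's English description precedes it below -/
import Mathlib

section
/- Let m ≥ 4 be an even natural number and l ≥ 1 a natural number. Consider S := sum over odd k with 1 ≤ k ≤ m-1 of [ binom(m-1, k-1) * (1 - k/2)^l + binom(m-1, k) * (-k/2)^l ]. Then S < 0 if l is odd, and S > 0 if l is even. -/
/-! For odd `l` the `k = 1` term equals `(1/2)^l (2 - m)`, which is negative, and every other
term has two nonpositive factors raised to an odd power. For even `l` all terms are sums of
even powers, and the `k = 1` term contains the positive summand `(1/2)^l`. -/

/-- The `k`-th summand of `Tr(S⁻(A_i)^l)` in `so(m, ℂ)`, with `n = m - 1`. -/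
noncomputable def spinorTraceTerm (n l k : ℕ) : ℝ :=
  (n.choose (k - 1) : ℝ) * (1 - (k : ℝ) / 2) ^ l + (n.choose k : ℝ) * (-(k : ℝ) / 2) ^ l

lemma spinorTraceTerm_one (n l : ℕ) :
    spinorTraceTerm n l 1 = (1 / 2 : ℝ) ^ l + n * (-(1 / 2) : ℝ) ^ l := by
  norm_num [spinorTraceTerm, neg_div]

lemma spinorTraceTerm_one_neg {n l : ℕ} (hn : 2 ≤ n) (hl : Odd l) :
    spinorTraceTerm n l 1 < 0 := by
  have hn' : (2 : ℝ) ≤ n := by exact_mod_cast hn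
  have hpos : (0 : ℝ) < (1 / 2) ^ l := by positivity
  rw [spinorTraceTerm_one, hl.neg_pow]
  nlinarith

lemma spinorTraceTerm_nonpos (n : ℕ) {k l : ℕ} (hk : 2 ≤ k) (hl : Odd l) :
    spinorTraceTerm n l k ≤ 0 := by
  have hk' : (2 : ℝ) ≤ k := by exact_mod_cast hk
  have h₁ : (1 - (k : ℝ) / 2) ^ l ≤ 0 := hl.pow_nonpos (by linarith)
  have h₂ : (-(k : ℝ) / 2) ^ l ≤ 0 := hl.pow_nonpos (by linarith)
  unfold spinorTraceTerm
  have := mul_nonpos_of_nonneg_of_nonpos (Nat.cast_nonneg (α := ℝ) (n.choose (k - 1))) h₁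
  have := mul_nonpos_of_nonneg_of_nonpos (Nat.cast_nonneg (α := ℝ) (n.choose k)) h₂
  linarith

lemma spinorTraceTerm_nonneg (n k : ℕ) {l : ℕ} (hl : Even l) : 0 ≤ spinorTraceTerm n l k := by
  unfold spinorTraceTerm
  have := hl.pow_nonneg (1 - (k : ℝ) / 2)
  have := hl.pow_nonneg (-(k : ℝ) / 2)
  positivity

lemma spinorTraceTerm_one_pos (n : ℕ) {l : ℕ} (hl : Even l) : 0 < spinorTraceTerm n l 1 := by
  rw [spinorTraceTerm_one]
  have := hl.pow_nonneg (-(1 / 2) : ℝ)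
  positivity

theorem stmt_7_general (m l : ℕ) (hm : 4 ≤ m) :
    (Odd l →
      ∑ k ∈ (Finset.Icc 1 (m - 1)).filter (fun k => Odd k),
        (((m - 1).choose (k - 1) : ℝ) * (1 - (k : ℝ) / 2) ^ l
          + ((m - 1).choose k : ℝ) * (-(k : ℝ) / 2) ^ l) < 0) ∧
    (Even l →
      0 < ∑ k ∈ (Finset.Icc 1 (m - 1)).filter (fun k => Odd k),
        (((m - 1).choose (k - 1) : ℝ) * (1 - (k : ℝ) / 2) ^ l
          + ((m - 1).choose k : ℝ) * (-(k : ℝ) / 2) ^ l)) := by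
  change (Odd l → ∑ k ∈ _, spinorTraceTerm (m - 1) l k < 0) ∧
    (Even l → 0 < ∑ k ∈ _, spinorTraceTerm (m - 1) l k)
  have one_mem : 1 ∈ (Finset.Icc 1 (m - 1)).filter (fun k => Odd k) := by
    simp only [Finset.mem_filter, Finset.mem_Icc]
    exact ⟨⟨le_rfl, by omega⟩, odd_one⟩
  refine ⟨fun hl => Finset.sum_neg' (fun k hk => ?_)
      ⟨1, one_mem, spinorTraceTerm_one_neg (by omega) hl⟩,
    fun hl => Finset.sum_pos' (fun k _ => spinorTraceTerm_nonneg _ k hl)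
      ⟨1, one_mem, spinorTraceTerm_one_pos _ hl⟩⟩
  obtain rfl | hk2 := (Finset.mem_Icc.mp (Finset.mem_filter.mp hk).1).1.eq_or_lt
  · exact (spinorTraceTerm_one_neg (by omega) hl).le
  · exact spinorTraceTerm_nonpos _ hk2 hl

theorem stmt_7 (m l : ℕ) (hm : 4 ≤ m) (hme : Even m) (hl : 1 ≤ l) :
    (Odd l →
      ∑ k ∈ (Finset.Icc 1 (m - 1)).filter (fun k => Odd k),
        (((m - 1).choose (k - 1) : ℝ) * (1 - (k : ℝ) / 2) ^ l
          + ((m - 1).choose k : ℝ) * (-(k : ℝ) / 2) ^ l) < 0) ∧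
    (Even l →
      0 < ∑ k ∈ (Finset.Icc 1 (m - 1)).filter (fun k => Odd k),
        (((m - 1).choose (k - 1) : ℝ) * (1 - (k : ℝ) / 2) ^ l
          + ((m - 1).choose k : ℝ) * (-(k : ℝ) / 2) ^ l)) :=
  stmt_7_general m l hm
end

section
/- Let l ≥ 2, 1 ≤ k ≤ l, and let n be an odd positive integer. Set h_1 = 2, h_2 = h_3 = -1, and h_i = 0 for 4 ≤ i ≤ l+1. Then the sum over all k-element subsets S of {1, ..., l+1} of (sum_{i in S} h_i)^n equals (2^n - 2) * ( binom(l-2, k-1) - binom(l-2, k-2) ), with the convention binom(a, b) = 0 for b < 0 or b > a. -/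
/-!
Only `S ∩ {x, y, z}` matters for the weight `∑ i ∈ S, h i`, where `x, y, z` carry `2, -1, -1`,
and a subset `T` of `{x, y, z}` has `C(l - 2, k - #T)` extensions to a `k`-subset. For odd `n`,
`∅` and `{x, y, z}` contribute nothing, the singletons contribute `2 ^ n - 1 - 1` per extension
and the pairs `1 + 1 - 2 ^ n`.
-/

section
open Finset
variable {α : Type*} [DecidableEq α]

theorem card_inter_add_card_inter_of_subset_union {a b S : Finset α} (hab : Disjoint a b)
    (hS : S ⊆ a ∪ b) : #(S ∩ a) + #(S ∩ b) = #S := by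
  rw [← card_union_of_disjoint (hab.mono inter_subset_right inter_subset_right),
    ← inter_union_distrib_left, inter_eq_left.2 hS]

theorem card_filter_powersetCard_union_inter_eq {a b T : Finset α} (hab : Disjoint a b)
    (hT : T ⊆ a) (k : ℕ) :
    #{S ∈ powersetCard k (a ∪ b) | S ∩ a = T} = if #T ≤ k then (#b).choose (k - #T) else 0 := by
  split_ifs with hTk
  · rw [← card_powersetCard]
    refine card_nbij' (· ∩ b) (T ∪ ·) ?_ ?_ ?_ ?_
    · intro S hS
      simp only [coe_filter, mem_powersetCard, Set.mem_ofPred_eq, mem_coe] at hS ⊢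
      obtain ⟨⟨hSab, rfl⟩, rfl⟩ := hS
      have := card_inter_add_card_inter_of_subset_union hab hSab
      exact ⟨inter_subset_right, by omega⟩
    · intro U hU
      simp only [coe_filter, mem_powersetCard, Set.mem_ofPred_eq, mem_coe] at hU ⊢
      have hTU : Disjoint T U := hab.mono hT hU.1
      refine ⟨⟨union_subset_union hT hU.1, by rw [card_union_of_disjoint hTU]; omega⟩, ?_⟩
      grind [Finset.disjoint_left]
    · intro S hS
      simp only [coe_filter, mem_powersetCard, Set.mem_ofPred_eq] at hS
      grind [Finset.disjoint_left]
    · intro U hU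
      simp only [mem_powersetCard, mem_coe] at hU
      grind [Finset.disjoint_left]
  · rw [card_eq_zero, filter_eq_empty_iff]
    rintro S hS rfl
    have := card_le_card (inter_subset_left : S ∩ a ⊆ S)
    rw [mem_powersetCard] at hS
    omega

theorem sum_powersetCard_union_inter {M : Type*} [AddCommMonoid M] {a b : Finset α}
    (hab : Disjoint a b) (k : ℕ) (g : Finset α → M) :
    ∑ S ∈ powersetCard k (a ∪ b), g (S ∩ a)
      = ∑ T ∈ a.powerset, (if #T ≤ k then (#b).choose (k - #T) else 0) • g T := by
  rw [← sum_fiberwise_of_maps_to (g := (· ∩ a)) (t := a.powerset)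
    fun S _ => mem_powerset.2 inter_subset_right]
  refine sum_congr rfl fun T hT => ?_
  rw [sum_congr rfl fun S hS => congrArg g (mem_filter.1 hS).2, sum_const,
    card_filter_powersetCard_union_inter_eq hab (mem_powerset.1 hT)]

theorem sum_powersetCard_univ_of_support_subset [Fintype α] {R M : Type*}
    [AddCommMonoid R] [AddCommMonoid M] {a : Finset α} {h : α → R} (hh : ∀ i ∉ a, h i = 0)
    (k : ℕ) (f : R → M) :
    ∑ S ∈ powersetCard k univ, f (∑ i ∈ S, h i)
      = ∑ T ∈ a.powerset,
          (if #T ≤ k then (Fintype.card α - #a).choose (k - #T) else 0) • f (∑ i ∈ T, h i) := by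
  rw [← card_compl, ← sum_powersetCard_union_inter disjoint_compl_right, union_compl]
  refine sum_congr rfl fun S _ => congrArg f ?_
  exact (sum_subset inter_subset_left fun i hiS hi =>
    hh i fun hia => hi (mem_inter.2 ⟨hiS, hia⟩)).symm

theorem sum_powerset_singleton {M : Type*} [AddCommMonoid M] (z : α) (g : Finset α → M) :
    ∑ T ∈ ({z} : Finset α).powerset, g T = g ∅ + g {z} := by
  rw [← insert_empty_eq z, sum_powerset_insert (notMem_empty z)]
  simp

theorem sum_powerset_triple {M : Type*} [AddCommMonoid M] {x y z : α} (hxy : x ≠ y) (hxz : x ≠ z)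
    (hyz : y ≠ z) (g : Finset α → M) :
    ∑ T ∈ ({x, y, z} : Finset α).powerset, g T
      = g ∅ + g {x} + g {y} + g {z} + g {x, y} + g {x, z} + g {y, z} + g {x, y, z} := by
  rw [sum_powerset_insert (by simp [hxy, hxz]), sum_powerset_insert (by simp [hyz]),
    sum_powerset_insert (by simp [hyz]), sum_powerset_singleton, sum_powerset_singleton,
    sum_powerset_singleton, sum_powerset_singleton]
  simp only [insert_empty_eq]
  abel

theorem sum_powersetCard_sum_pow_of_two_neg_one_neg_one [Fintype α] {x y z : α}
    (hxy : x ≠ y) (hxz : x ≠ z) (hyz : y ≠ z)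
    {h : α → ℤ} (hx : h x = 2) (hy : h y = -1) (hz : h z = -1)
    (h0 : ∀ i, i ≠ x → i ≠ y → i ≠ z → h i = 0) {n : ℕ} (hn : Odd n) {k : ℕ} (hk : 1 ≤ k) :
    ∑ S ∈ powersetCard k univ, (∑ i ∈ S, h i) ^ n
      = (2 ^ n - 2) * (((Fintype.card α - 3).choose (k - 1) : ℤ)
          - if 2 ≤ k then ((Fintype.card α - 3).choose (k - 2) : ℤ) else 0) := by
  have hsupp : ∀ i ∉ ({x, y, z} : Finset α), h i = 0 := fun i hi => by
    simp only [mem_insert, mem_singleton, not_or] at hi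
    exact h0 i hi.1 hi.2.1 hi.2.2
  rw [sum_powersetCard_univ_of_support_subset hsupp k (· ^ n), sum_powerset_triple hxy hxz hyz]
  simp only [card_empty, zero_le, ↓reduceIte, mem_insert, hxy, mem_singleton, hxz, or_self,
    not_false_eq_true, card_insert_of_notMem, hyz, card_singleton, Nat.reduceAdd, tsub_zero,
    sum_empty, ne_eq, hn.pos.ne', zero_pow, nsmul_zero, hk, sum_singleton, hx, Int.nsmul_eq_mul,
    zero_add, hy, Int.reduceNeg, hn.neg_pow, one_pow, mul_neg, mul_one, hz, sum_insert,
    Int.reduceAdd, Nat.cast_ite, CharP.cast_eq_zero, ite_mul, zero_mul, add_neg_cancel, add_zero]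
  split_ifs <;> ring

end

theorem stmt_11_general (l k n : ℕ) (hl : 2 ≤ l) (hk : 1 ≤ k) (hno : Odd n)
    (h : Fin (l + 1) → ℤ)
    (hh : h = fun (i : Fin (l + 1)) => if (i : ℕ) = 0 then 2 else if (i : ℕ) ≤ 2 then -1 else 0) :
    ∑ S ∈ Finset.powersetCard k (Finset.univ : Finset (Fin (l + 1))), (∑ i ∈ S, h i) ^ n
      = (2 ^ n - 2) *
        (((l - 2).choose (k - 1) : ℤ) - if 2 ≤ k then ((l - 2).choose (k - 2) : ℤ) else 0) := by
  have key := sum_powersetCard_sum_pow_of_two_neg_one_neg_one (α := Fin (l + 1))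
    (x := ⟨0, by omega⟩) (y := ⟨1, by omega⟩) (z := ⟨2, by omega⟩) (h := h)
    (by simp [Fin.ext_iff]) (by simp [Fin.ext_iff]) (by simp [Fin.ext_iff])
    (by simp [hh]) (by simp [hh]) (by simp [hh]) ?_ hno hk
  · rwa [Fintype.card_fin, show l + 1 - 3 = l - 2 by omega] at key
  · intro i hx hy hz
    simp only [ne_eq, Fin.ext_iff] at hx hy hz
    simp only [hh, if_neg hx, ite_eq_right_iff]
    omega

theorem stmt_11 (l k n : ℕ) (hl : 2 ≤ l) (hk : 1 ≤ k) (hk' : k ≤ l)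
    (hn : 0 < n) (hno : Odd n)
    (h : Fin (l + 1) → ℤ)
    (hh : h = fun (i : Fin (l + 1)) => if (i : ℕ) = 0 then 2 else if (i : ℕ) ≤ 2 then -1 else 0) :
    ∑ S ∈ Finset.powersetCard k (Finset.univ : Finset (Fin (l + 1))), (∑ i ∈ S, h i) ^ n
      = (2 ^ n - 2) *
        (((l - 2).choose (k - 1) : ℤ) - if 2 ≤ k then ((l - 2).choose (k - 2) : ℤ) else 0) :=
  stmt_11_general l k n hl hk hno h hh
end

section
/- Let m ≥ 0 and let π_m(H) = diag(im, i(m-2), i(m-4), ..., -im) be the diagonal (m+1)×(m+1) complex matrix with entries i(m - 2k) for k = 0, ..., m, and let π_m(X) be the (m+1)×(m+1) complex matrix with (π_m(X))_{k,k+1} = -ik and (π_m(X))_{k+1,k} = -i(m-k+1) for k = 1, ..., m and all other entries zero. Then Tr(π_m(H)^2) + 2*Tr(π_m(X)^2) = -m(m+1)(m+2). -/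
/-!
`π_m(H)²` is diagonal with entries `-(m - 2k)²`, and `π_m(X)` is tridiagonal with zero diagonal,
so `Tr(π_m(X)²)` is twice the sum of the products of matching super- and subdiagonal entries,
namely `-2 ∑_{k<m} (k+1)(m-k)`. The two sums are `∑_{k=0}^m (m-2k)² = m(m+1)(m+2)/3` and
`∑_{k<m} (k+1)(m-k) = m(m+1)(m+2)/6`, which combine to `-m(m+1)(m+2)`.
-/

open Finset Matrix

lemma sum_ite_succ_eq_sum_range {M : Type*} [AddCommMonoid M] (n : ℕ) (f : ℕ → M) :
    ∑ a : Fin (n + 1), ∑ b : Fin (n + 1), (if (a : ℕ) + 1 = b then f a else 0)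
      = ∑ k ∈ range n, f k := by
  have inner (a : ℕ) :
      ∑ b : Fin (n + 1), (if a + 1 = b then f a else 0) = if a < n then f a else 0 := by
    rw [Fin.sum_univ_eq_sum_range (fun b => if a + 1 = b then f a else 0) (n + 1), sum_ite_eq]
    simp only [mem_range, Nat.add_lt_add_iff_right]
  simp only [inner, Fin.sum_univ_castSucc, Fin.val_castSucc, Fin.is_lt, if_true, Fin.val_last,
    lt_irrefl, if_false, add_zero]
  exact Fin.sum_univ_eq_sum_range f n

lemma trace_mul_self_of_tridiagonal {R : Type*} [CommRing R] {n : ℕ}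
    (A : Matrix (Fin (n + 1)) (Fin (n + 1)) R) (u l : ℕ → R)
    (hA : ∀ a b, A a b = if (a : ℕ) + 1 = b then u a else if (b : ℕ) + 1 = a then l b else 0) :
    trace (A * A) = 2 * ∑ k ∈ range n, u k * l k := by
  have entry (a b : Fin (n + 1)) : A a b * A b a
      = (if (a : ℕ) + 1 = b then u a * l a else 0) +
        (if (b : ℕ) + 1 = a then u b * l b else 0) := by
    rw [hA, hA]
    split_ifs <;> first | omega | ring
  simp only [trace, diag_apply, mul_apply, entry, sum_add_distrib]
  rw [sum_ite_succ_eq_sum_range (f := fun k => u k * l k), sum_comm,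
    sum_ite_succ_eq_sum_range (f := fun k => u k * l k), two_mul]

lemma three_mul_sum_range_sub_two_mul_sq {R : Type*} [CommRing R] (c : R) (n : ℕ) :
    3 * ∑ k ∈ range n, (c - 2 * k) ^ 2
      = 3 * n * c ^ 2 - 6 * c * n * (n - 1) + 2 * (n - 1) * n * (2 * n - 1) := by
  induction n with
  | zero => simp
  | succ n ih => rw [sum_range_succ, mul_add, ih]; push_cast; ring

lemma six_mul_sum_range_succ_mul_sub {R : Type*} [CommRing R] (c : R) (n : ℕ) :
    6 * ∑ k ∈ range n, (k + 1) * (c - k)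
      = 3 * n * (n + 1) * c - 2 * (n - 1) * n * (n + 1) := by
  induction n with
  | zero => simp
  | succ n ih => rw [sum_range_succ, mul_add, ih]; push_cast; ring

theorem stmt_17 (m : ℕ)
    (piH piX : Matrix (Fin (m + 1)) (Fin (m + 1)) ℂ)
    (hH : piH = Matrix.diagonal (fun k : Fin (m + 1) => Complex.I * ((m : ℂ) - 2 * (k : ℕ))))
    (hX : piX = fun a b : Fin (m + 1) =>
      if (a : ℕ) + 1 = (b : ℕ) then -Complex.I * ((a : ℕ) + 1)
      else if (b : ℕ) + 1 = (a : ℕ) then -Complex.I * ((m : ℂ) - (b : ℕ)) else 0) :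
    Matrix.trace (piH * piH) + 2 * Matrix.trace (piX * piX)
      = -((m : ℂ) * (m + 1) * (m + 2)) := by
  have traceH : trace (piH * piH) = -∑ k ∈ range (m + 1), ((m : ℂ) - 2 * k) ^ 2 := by
    simp only [hH, diagonal_mul_diagonal, trace_diagonal, ← sum_neg_distrib]
    rw [← Fin.sum_univ_eq_sum_range (fun k => -((m : ℂ) - 2 * k) ^ 2)]
    refine sum_congr rfl fun k _ => ?_
    linear_combination ((m : ℂ) - 2 * (k : ℕ)) ^ 2 * Complex.I_mul_I
  have traceX : trace (piX * piX) = -2 * ∑ k ∈ range m, ((k : ℂ) + 1) * (m - k) := by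
    rw [trace_mul_self_of_tridiagonal piX (fun k => -Complex.I * ((k : ℂ) + 1))
      (fun k => -Complex.I * ((m : ℂ) - k)) (fun a b => by rw [hX]), mul_sum, mul_sum]
    refine sum_congr rfl fun k _ => ?_
    linear_combination 2 * ((k : ℂ) + 1) * (m - k) * Complex.I_mul_I
  rw [traceH, traceX]
  have sumH := three_mul_sum_range_sub_two_mul_sq (m : ℂ) (m + 1)
  have sumX := six_mul_sum_range_succ_mul_sub (m : ℂ) m
  push_cast at sumH
  linear_combination (-1 / 3 : ℂ) * sumH - (2 / 3 : ℂ) * sumX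
end
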